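/- Let d ≥ 1 and let V : ℝ^d × ℝ → ℝ be bounded, nonnegative, and continuous in both variables (x, s). Let u : ℝ^d → ℝ be a bounded, twice continuously differentiable, real-valued solution of Δu = V(x, u)·u on ℝ^d. Assume there exists a sequence (r_j) of positive reals with r_j → +∞ such that ∫_{r_j ≤ |x| ≤ r_j+1} u(x)² dx → 0 as j → +∞. Then for every ball B(x_0, R) ⊂ ℝ^d one has ∫_{B(x_0,R)} V(x, u(x))·u(x)² dx = 0. -/

import Mathlib

open MeasureTheory Filter

/-- The Laplacian `Δu(x) = ∑ i, ∂²u/∂x_i²(x)` on `ℝ^d`. -/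
noncomputable def laplacian {d : ℕ} {F : Type*} [NormedAddCommGroup F] [NormedSpace ℝ F]
    (u : EuclideanSpace ℝ (Fin d) → F) (x : EuclideanSpace ℝ (Fin d)) : F :=
  ∑ i : Fin d, fderiv ℝ (fun y => fderiv ℝ u y (EuclideanSpace.single i (1 : ℝ))) x
    (EuclideanSpace.single i (1 : ℝ))

-- Lipschitz constant for smoothTransition
lemma smoothTransition_lipschitz : ∃ K : NNReal, LipschitzWith K Real.smoothTransition := by
  obtain ⟨K₀, hK₀⟩ := (isCompact_Icc (a := (0:ℝ)) (b := 1)).exists_bound_of_continuousOn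
    ((Real.smoothTransition.contDiff (n := 1)).continuous_deriv le_rfl).continuousOn
  refine ⟨Real.toNNReal K₀, lipschitzWith_of_nnnorm_deriv_le
    ((Real.smoothTransition.contDiff (n := 1)).differentiable (by norm_num)) ?_⟩
  intro t
  rw [← NNReal.coe_le_coe, coe_nnnorm, Real.coe_toNNReal']
  rcases le_or_gt t 0 with ht | ht
  · rcases eq_or_lt_of_le ht with rfl | ht
    · exact le_max_of_le_left (hK₀ 0 (by norm_num))
    · have : deriv Real.smoothTransition t = 0 := by
        have h0 : Real.smoothTransition =ᶠ[nhds t] (fun _ => (0:ℝ)) := by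
          filter_upwards [Iio_mem_nhds ht] with y hy
          exact Real.smoothTransition.zero_of_nonpos (le_of_lt hy)
        rw [h0.deriv_eq, deriv_const]
      simp [this]
  · rcases le_or_gt t 1 with ht1 | ht1
    · exact le_max_of_le_left (hK₀ t ⟨le_of_lt ht, ht1⟩)
    · have : deriv Real.smoothTransition t = 0 := by
        have h0 : Real.smoothTransition =ᶠ[nhds t] (fun _ => (1:ℝ)) := by
          filter_upwards [Ioi_mem_nhds ht1] with y hy
          exact Real.smoothTransition.one_of_one_le (le_of_lt hy)
        rw [h0.deriv_eq, deriv_const]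
      simp [this]

lemma cutoff_exists (d : ℕ) : ∃ K : ℝ, 0 ≤ K ∧ ∀ s : ℝ, 0 < s →
    ∃ φ : EuclideanSpace ℝ (Fin d) → ℝ,
      ContDiff ℝ 2 φ ∧
      (∀ x, ‖x‖ < s → φ x = 1) ∧
      (∀ x, 0 ≤ φ x) ∧ (∀ x, φ x ≤ 1) ∧
      (∀ x, s + 1 ≤ ‖x‖ → φ x = 0) ∧
      (∀ x, ‖fderiv ℝ φ x‖ ≤ K) ∧
      (∀ x, ‖x‖ < s → fderiv ℝ φ x = 0) ∧
      (∀ x, s + 1 < ‖x‖ → fderiv ℝ φ x = 0) := by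
  obtain ⟨K, hK⟩ := smoothTransition_lipschitz
  refine ⟨K, K.coe_nonneg, fun s hs => ?_⟩
  set φ : EuclideanSpace ℝ (Fin d) → ℝ :=
    fun x => Real.smoothTransition (s + 1 - ‖x‖) with hφ
  have hlip : LipschitzWith (K * (0 + 1)) φ :=
    hK.comp ((LipschitzWith.const' (s+1)).sub lipschitzWith_one_norm)
  rw [zero_add, mul_one] at hlip
  have h1 : ∀ x : EuclideanSpace ℝ (Fin d), ‖x‖ < s → φ x = 1 := by
    intro x hx
    exact Real.smoothTransition.one_of_one_le (by linarith)
  have h0 : ∀ x : EuclideanSpace ℝ (Fin d), s + 1 ≤ ‖x‖ → φ x = 0 := by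
    intro x hx
    exact Real.smoothTransition.zero_of_nonpos (by linarith)
  have hcd : ContDiff ℝ 2 φ := by
    rw [contDiff_iff_contDiffAt]
    intro x
    rcases lt_or_ge ‖x‖ s with hx | hx
    · have hEq : φ =ᶠ[nhds x] (fun _ => (1:ℝ)) := by
        have hb : Metric.ball (0 : EuclideanSpace ℝ (Fin d)) s ∈ nhds x := by
          apply Metric.isOpen_ball.mem_nhds; simpa [Metric.mem_ball, dist_zero_right] using hx
        filter_upwards [hb] with y hy
        exact h1 y (by simpa [Metric.mem_ball, dist_zero_right] using hy)
      exact (contDiffAt_const (c := (1:ℝ))).congr_of_eventuallyEq hEq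
    · have hx0 : x ≠ 0 := by intro h; rw [h] at hx; simp at hx; linarith
      exact Real.smoothTransition.contDiffAt.comp x
        (contDiffAt_const.sub (contDiffAt_norm ℝ hx0))
  refine ⟨φ, hcd, h1, fun x => Real.smoothTransition.nonneg _,
    fun x => Real.smoothTransition.le_one _, h0, fun x => norm_fderiv_le_of_lipschitz ℝ hlip,
    ?_, ?_⟩
  · intro x hx
    have : φ =ᶠ[nhds x] (fun _ => (1:ℝ)) := by
      have hb : Metric.ball (0 : EuclideanSpace ℝ (Fin d)) s ∈ nhds x := by
        apply Metric.isOpen_ball.mem_nhds; simpa [Metric.mem_ball, dist_zero_right] using hx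
      filter_upwards [hb] with y hy
      exact h1 y (by simpa [Metric.mem_ball, dist_zero_right] using hy)
    rw [this.fderiv_eq, fderiv_fun_const]; rfl
  · intro x hx
    have : φ =ᶠ[nhds x] (fun _ => (0:ℝ)) := by
      have hb : {y : EuclideanSpace ℝ (Fin d) | s + 1 < ‖y‖} ∈ nhds x := by
        exact (isOpen_lt continuous_const continuous_norm).mem_nhds hx
      filter_upwards [hb] with y hy
      exact h0 y (le_of_lt hy)
    rw [this.fderiv_eq, fderiv_fun_const]; rfl

lemma key_estimate (d : ℕ)
    (V : EuclideanSpace ℝ (Fin d) → ℝ → ℝ)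
    (hVcont : Continuous fun p : EuclideanSpace ℝ (Fin d) × ℝ => V p.1 p.2)
    (hVnonneg : ∀ x s, 0 ≤ V x s)
    (u : EuclideanSpace ℝ (Fin d) → ℝ)
    (hu : ContDiff ℝ 2 u)
    (hsol : ∀ x, laplacian u x = V x (u x) * u x)
    {s K : ℝ} (hK : 0 ≤ K)
    (φ : EuclideanSpace ℝ (Fin d) → ℝ)
    (hφcd : ContDiff ℝ 2 φ)
    (hφz : ∀ x, s + 1 ≤ ‖x‖ → φ x = 0)
    (hφK : ∀ x, ‖fderiv ℝ φ x‖ ≤ K)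
    (hφin : ∀ x, ‖x‖ < s → fderiv ℝ φ x = 0)
    (hφout : ∀ x, s + 1 < ‖x‖ → fderiv ℝ φ x = 0) :
    ∫ x, φ x ^ 2 * (V x (u x) * u x ^ 2) ≤
      (d * K ^ 2) * ∫ x in {x : EuclideanSpace ℝ (Fin d) | s ≤ ‖x‖ ∧ ‖x‖ ≤ s + 1}, u x ^ 2 := by
  set e : Fin d → EuclideanSpace ℝ (Fin d) := fun i => EuclideanSpace.single i (1:ℝ) with he
  set w : Fin d → EuclideanSpace ℝ (Fin d) → ℝ := fun i x => fderiv ℝ u x (e i) with hw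
  set p : Fin d → EuclideanSpace ℝ (Fin d) → ℝ := fun i x => fderiv ℝ φ x (e i) with hp
  set f : EuclideanSpace ℝ (Fin d) → ℝ := fun x => φ x * (φ x * u x) with hf
  set A : EuclideanSpace ℝ (Fin d) → ℝ := fun x => φ x ^ 2 * (V x (u x) * u x ^ 2) with hA
  set B : EuclideanSpace ℝ (Fin d) → ℝ := fun x => ∑ i : Fin d, (φ x * w i x + u x * p i x)^2 with hB
  set C : EuclideanSpace ℝ (Fin d) → ℝ := fun x => u x ^ 2 * ∑ i : Fin d, (p i x)^2 with hC
  set ann : Set (EuclideanSpace ℝ (Fin d)) := {x : EuclideanSpace ℝ (Fin d) | s ≤ ‖x‖ ∧ ‖x‖ ≤ s + 1} with hann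
  -- regularity
  have h12 : (1 : WithTop ℕ∞) + 1 ≤ 2 := by norm_num
  have h1 : (1 : WithTop ℕ∞) ≤ 2 := by norm_num
  have hud : Differentiable ℝ u := hu.differentiable (by norm_num)
  have hφd : Differentiable ℝ φ := hφcd.differentiable (by norm_num)
  have huc : Continuous u := hu.continuous
  have hφc : Continuous φ := hφcd.continuous
  have hw1 : ∀ i, ContDiff ℝ 1 (w i) := fun i =>
    (ContinuousLinearMap.apply ℝ ℝ (e i)).contDiff.comp (hu.fderiv_right h12)
  have hwd : ∀ i, Differentiable ℝ (w i) := fun i => (hw1 i).differentiable (by norm_num)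
  have hwc : ∀ i, Continuous (w i) := fun i => (hw1 i).continuous
  have hdwc : ∀ i, Continuous (fun x => fderiv ℝ (w i) x (e i)) := fun i =>
    ((hw1 i).continuous_fderiv (by norm_num)).clm_apply continuous_const
  have hpc : ∀ i, Continuous (p i) := fun i =>
    (hφcd.continuous_fderiv (by norm_num)).clm_apply continuous_const
  have hfd : Differentiable ℝ f := hφd.mul (hφd.mul hud)
  have hf1 : ContDiff ℝ 1 f := (hφcd.of_le h1).mul ((hφcd.of_le h1).mul (hu.of_le h1))
  have hfc : Continuous f := hf1.continuous
  have hdfc : ∀ i, Continuous (fun x => fderiv ℝ f x (e i)) := fun i =>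
    (hf1.continuous_fderiv (by norm_num)).clm_apply continuous_const
  -- derivative of f
  have hf' : ∀ x, fderiv ℝ f x =
      φ x • (φ x • fderiv ℝ u x + u x • fderiv ℝ φ x) + (φ x * u x) • fderiv ℝ φ x := by
    intro x
    exact ((hφd x).hasFDerivAt.mul ((hφd x).hasFDerivAt.mul (hud x).hasFDerivAt)).fderiv
  have hfei : ∀ (i : Fin d) (x : EuclideanSpace ℝ (Fin d)), fderiv ℝ f x (e i) =
      φ x ^ 2 * w i x + 2 * φ x * u x * p i x := by
    intro i x
    rw [hf' x]
    simp only [ContinuousLinearMap.add_apply, ContinuousLinearMap.smul_apply, smul_eq_mul,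
      hw, hp]
    ring
  -- integrability helper
  have hφz' : ∀ x : EuclideanSpace ℝ (Fin d), s + 1 < ‖x‖ → φ x = 0 := fun x hx => hφz x hx.le
  have hpz : ∀ (i : Fin d) (x : EuclideanSpace ℝ (Fin d)), s + 1 < ‖x‖ → p i x = 0 := by
    intro i x hx; rw [hp]; simp only []; rw [hφout x hx]; simp
  have hint : ∀ g : EuclideanSpace ℝ (Fin d) → ℝ, Continuous g → (∀ x, s + 1 < ‖x‖ → g x = 0) → Integrable g := by
    intro g hgc hgz
    apply hgc.integrable_of_hasCompactSupport
    apply HasCompactSupport.intro (isCompact_closedBall (0:EuclideanSpace ℝ (Fin d)) (s+1))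
    intro x hx
    exact hgz x (by simpa [Metric.mem_closedBall, dist_zero_right, not_le] using hx)
  have hIfw : ∀ i, Integrable (fun x => f x * w i x) := fun i =>
    hint _ (hfc.mul (hwc i)) (fun x hx => by rw [hf]; simp only []; rw [hφz' x hx]; ring)
  have hIfdw : ∀ i, Integrable (fun x => f x * fderiv ℝ (w i) x (e i)) := fun i =>
    hint _ (hfc.mul (hdwc i)) (fun x hx => by rw [hf]; simp only []; rw [hφz' x hx]; ring)
  have hIdfw : ∀ i, Integrable (fun x => fderiv ℝ f x (e i) * w i x) := fun i =>
    hint _ ((hdfc i).mul (hwc i))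
      (fun x hx => by rw [hfei i x, hφz' x hx, hpz i x hx]; ring)
  have hVuc : Continuous (fun x : EuclideanSpace ℝ (Fin d) => V x (u x)) := hVcont.comp (continuous_id.prodMk huc)
  have hIA : Integrable A :=
    hint _ (((hφc.pow 2)).mul (hVuc.mul (huc.pow 2)))
      (fun x hx => by rw [hA]; simp only []; rw [hφz' x hx]; ring)
  have hIB : Integrable B := by
    apply hint _ (continuous_finset_sum _ (fun i _ => ((hφc.mul (hwc i)).add (huc.mul (hpc i))).pow 2))
    intro x hx
    apply Finset.sum_eq_zero
    intro i _
    show (φ x * w i x + u x * p i x) ^ 2 = 0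
    rw [hφz' x hx, hpz i x hx]; ring
  have hIC : Integrable C := by
    apply hint _ ((huc.pow 2).mul (continuous_finset_sum _ (fun i _ => (hpc i).pow 2)))
    intro x hx
    show u x ^ 2 * ∑ i : Fin d, (p i x)^2 = 0
    rw [Finset.sum_eq_zero (fun i _ => by rw [hpz i x hx]; ring)]; ring
  -- integration by parts
  have ibp : ∀ i : Fin d, ∫ x, f x * fderiv ℝ (w i) x (e i) =
      - ∫ x, fderiv ℝ f x (e i) * w i x := fun i =>
    integral_mul_fderiv_eq_neg_fderiv_mul_of_integrable (hIdfw i) (hIfdw i) (hIfw i) (fun x _ => hfd x) (fun x _ => hwd i x)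
  -- the identity ∫ A = ∫ C - ∫ B
  have hlap : ∀ x : EuclideanSpace ℝ (Fin d), laplacian u x = ∑ i : Fin d, fderiv ℝ (w i) x (e i) := fun x => rfl
  have hAeq : ∫ x, A x = ∑ i : Fin d, ∫ x, f x * fderiv ℝ (w i) x (e i) := by
    rw [← integral_finset_sum _ (fun i _ => hIfdw i)]
    congr 1
    ext x
    rw [← Finset.mul_sum, ← hlap x, hsol x, hA, hf]
    simp only []
    ring
  have hBCid : (∫ x, B x) - ∫ x, C x = - ∫ x, A x := by
    rw [← integral_sub hIB hIC]
    have : ∀ x : EuclideanSpace ℝ (Fin d), B x - C x = ∑ i : Fin d, fderiv ℝ f x (e i) * w i x := by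
      intro x
      rw [hB, hC]; simp only []
      rw [Finset.mul_sum, ← Finset.sum_sub_distrib]
      apply Finset.sum_congr rfl
      intro i _
      rw [hfei i x]
      ring
    rw [integral_congr_ae (Eventually.of_forall this)]
    rw [integral_finset_sum _ (fun i _ => hIdfw i)]
    rw [hAeq, ← Finset.sum_neg_distrib]
    apply Finset.sum_congr rfl
    intro i _
    rw [ibp i]; ring_nf
  have hBnn : 0 ≤ ∫ x, B x :=
    integral_nonneg (fun x => Finset.sum_nonneg (fun i _ => sq_nonneg _))
  have hAC : ∫ x, A x ≤ ∫ x, C x := by linarith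
  -- bound ∫ C
  have hannclosed : IsClosed ann := by
    rw [hann]
    have : {x : EuclideanSpace ℝ (Fin d) | s ≤ ‖x‖ ∧ ‖x‖ ≤ s + 1} = {x : EuclideanSpace ℝ (Fin d) | s ≤ ‖x‖} ∩ {x : EuclideanSpace ℝ (Fin d) | ‖x‖ ≤ s + 1} := by
      ext x; simp [Set.mem_setOf_eq, Set.mem_inter_iff]
    rw [this]
    exact (isClosed_le continuous_const continuous_norm).inter
      (isClosed_le continuous_norm continuous_const)
  have hanncompact : IsCompact ann := by
    apply (isCompact_closedBall (0:EuclideanSpace ℝ (Fin d)) (s+1)).of_isClosed_subset hannclosed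
    intro x hx
    simpa [Metric.mem_closedBall, dist_zero_right] using hx.2
  have hCz : ∀ x : EuclideanSpace ℝ (Fin d), x ∉ ann → C x = 0 := by
    intro x hx
    rw [hann] at hx
    simp only [Set.mem_setOf_eq, not_and, not_le] at hx
    have hp0 : ∀ i : Fin d, p i x = 0 := by
      intro i
      rcases lt_or_ge ‖x‖ s with h | h
      · rw [hp]; simp only []; rw [hφin x h]; simp
      · exact hpz i x (hx h)
    rw [hC]; simp only []
    rw [Finset.sum_eq_zero (fun i _ => by rw [hp0 i]; ring)]; ring
  have hCann : ∫ x, C x = ∫ x in ann, C x :=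
    (setIntegral_eq_integral_of_forall_compl_eq_zero hCz).symm
  have hCbound : ∫ x in ann, C x ≤ ∫ x in ann, (d * K ^ 2) * u x ^ 2 := by
    apply setIntegral_mono_on (hf := hIC.integrableOn)
      (hg := (continuous_const.mul (huc.pow 2)).continuousOn.integrableOn_compact hanncompact)
      hannclosed.measurableSet
    intro x _
    have hsum : ∑ i : Fin d, (p i x)^2 ≤ (d : ℝ) * K ^ 2 := by
      calc ∑ i : Fin d, (p i x)^2 ≤ ∑ _i : Fin d, K ^ 2 := by
            apply Finset.sum_le_sum
            intro i _
            have habs : |p i x| ≤ K := by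
              rw [hp]; simp only []
              calc |fderiv ℝ φ x (e i)| ≤ ‖fderiv ℝ φ x‖ * ‖e i‖ := (fderiv ℝ φ x).le_opNorm (e i)
                _ ≤ K := by
                    rw [he]; simp only []
                    rw [EuclideanSpace.norm_single]
                    simpa using hφK x
            exact sq_le_sq' (neg_le_of_abs_le habs) (le_of_abs_le habs)
        _ = (d : ℝ) * K ^ 2 := by
            rw [Finset.sum_const, Finset.card_univ, Fintype.card_fin, nsmul_eq_mul]
    have hsnn : (0:ℝ) ≤ ∑ i : Fin d, (p i x)^2 := Finset.sum_nonneg (fun i _ => sq_nonneg _)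
    show u x ^ 2 * ∑ i : Fin d, (p i x)^2 ≤ (d * K ^ 2) * u x ^ 2
    nlinarith [sq_nonneg (u x)]
  calc ∫ x, A x ≤ ∫ x, C x := hAC
    _ = ∫ x in ann, C x := hCann
    _ ≤ ∫ x in ann, (d * K ^ 2) * u x ^ 2 := hCbound
    _ = (d * K ^ 2) * ∫ x in ann, u x ^ 2 := integral_const_mul _ _


/-- **Proposition 3.1 (vanishing of the potential energy).** Let `V : ℝ^d × ℝ → ℝ` be bounded,
nonnegative and continuous, and let `u` be a bounded real-valued `C²` solution of
`Δu = V(x,u) u` on `ℝ^d`. If the `L²`-mass of `u` on the annuli `{r_j ≤ |x| ≤ r_j + 1}` tends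
to `0` along some sequence `r_j → +∞`, then `∫_{B(x₀,R)} V(x,u(x)) u(x)² dx = 0` for every
ball `B(x₀,R) ⊂ ℝ^d`. -/
theorem potential_energy_vanishes
    (d : ℕ) (hd : 1 ≤ d)
    (V : EuclideanSpace ℝ (Fin d) → ℝ → ℝ)
    (hVcont : Continuous fun p : EuclideanSpace ℝ (Fin d) × ℝ => V p.1 p.2)
    (hVbdd : ∃ M : ℝ, ∀ x s, |V x s| ≤ M)
    (hVnonneg : ∀ x s, 0 ≤ V x s)
    (u : EuclideanSpace ℝ (Fin d) → ℝ)
    (hubdd : ∃ C : ℝ, ∀ x, |u x| ≤ C)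
    (hu : ContDiff ℝ 2 u)
    (hsol : ∀ x, laplacian u x = V x (u x) * u x)
    (r : ℕ → ℝ) (hrpos : ∀ j, 0 < r j)
    (hrtop : Tendsto r atTop atTop)
    (hdecay : Tendsto
      (fun j => ∫ x in {x : EuclideanSpace ℝ (Fin d) | r j ≤ ‖x‖ ∧ ‖x‖ ≤ r j + 1}, u x ^ 2)
      atTop (nhds 0)) :
    ∀ (x₀ : EuclideanSpace ℝ (Fin d)) (R : ℝ), 0 < R →
      ∫ x in Metric.ball x₀ R, V x (u x) * u x ^ 2 = 0 := by
  intro x₀ R hR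
  obtain ⟨K, hK0, hcut⟩ := cutoff_exists d
  have hInn : 0 ≤ ∫ x in Metric.ball x₀ R, V x (u x) * u x ^ 2 :=
    setIntegral_nonneg measurableSet_ball
      (fun x _ => mul_nonneg (hVnonneg x (u x)) (sq_nonneg _))
  have hconv : Tendsto
      (fun j => (d * K ^ 2) *
        ∫ x in {x : EuclideanSpace ℝ (Fin d) | r j ≤ ‖x‖ ∧ ‖x‖ ≤ r j + 1}, u x ^ 2)
      atTop (nhds 0) := by
    have := hdecay.const_mul ((d : ℝ) * K ^ 2)
    simpa using this
  have hev : ∀ᶠ j in atTop,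
      (∫ x in Metric.ball x₀ R, V x (u x) * u x ^ 2) ≤ (d * K ^ 2) *
        ∫ x in {x : EuclideanSpace ℝ (Fin d) | r j ≤ ‖x‖ ∧ ‖x‖ ≤ r j + 1}, u x ^ 2 := by
    filter_upwards [hrtop.eventually_ge_atTop (‖x₀‖ + R)] with j hj
    obtain ⟨φ, hφcd, hφ1, hφ0, hφle1, hφz, hφK, hφin, hφout⟩ := hcut (r j) (hrpos j)
    have huc : Continuous u := hu.continuous
    have hφc : Continuous φ := hφcd.continuous
    have hVuc : Continuous (fun x : EuclideanSpace ℝ (Fin d) => V x (u x)) :=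
      hVcont.comp (continuous_id.prodMk huc)
    have hIA : Integrable (fun x : EuclideanSpace ℝ (Fin d) =>
        φ x ^ 2 * (V x (u x) * u x ^ 2)) := by
      apply Continuous.integrable_of_hasCompactSupport
        ((hφc.pow 2).mul (hVuc.mul (huc.pow 2)))
      apply HasCompactSupport.intro
        (isCompact_closedBall (0 : EuclideanSpace ℝ (Fin d)) (r j + 1))
      intro x hx
      have : r j + 1 ≤ ‖x‖ := by
        have := (by simpa [Metric.mem_closedBall, dist_zero_right, not_le] using hx :
          r j + 1 < ‖x‖)
        linarith
      show φ x ^ 2 * (V x (u x) * u x ^ 2) = 0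
      rw [hφz x this]; ring
    have hball : (∫ x in Metric.ball x₀ R, V x (u x) * u x ^ 2) =
        ∫ x in Metric.ball x₀ R, φ x ^ 2 * (V x (u x) * u x ^ 2) := by
      apply setIntegral_congr_fun measurableSet_ball
      intro x hx
      show V x (u x) * u x ^ 2 = φ x ^ 2 * (V x (u x) * u x ^ 2)
      have hxnorm : ‖x‖ < r j := by
        have h1 : ‖x - x₀‖ < R := by
          rw [← dist_eq_norm]; exact Metric.mem_ball.mp hx
        have h2 : ‖x‖ ≤ ‖x - x₀‖ + ‖x₀‖ := by
          simpa using norm_add_le (x - x₀) x₀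
        linarith
      rw [hφ1 x hxnorm]
      ring
    have hle : (∫ x in Metric.ball x₀ R, φ x ^ 2 * (V x (u x) * u x ^ 2)) ≤
        ∫ x, φ x ^ 2 * (V x (u x) * u x ^ 2) := by
      apply setIntegral_le_integral hIA
      filter_upwards with x
      exact mul_nonneg (sq_nonneg _) (mul_nonneg (hVnonneg x (u x)) (sq_nonneg _))
    have hkey := key_estimate d V hVcont hVnonneg u hu hsol hK0 φ hφcd hφz hφK hφin hφout
    calc (∫ x in Metric.ball x₀ R, V x (u x) * u x ^ 2)
        = ∫ x in Metric.ball x₀ R, φ x ^ 2 * (V x (u x) * u x ^ 2) := hball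
      _ ≤ ∫ x, φ x ^ 2 * (V x (u x) * u x ^ 2) := hle
      _ ≤ (d * K ^ 2) *
          ∫ x in {x : EuclideanSpace ℝ (Fin d) | r j ≤ ‖x‖ ∧ ‖x‖ ≤ r j + 1}, u x ^ 2 := hkey
  exact le_antisymm (ge_of_tendsto hconv hev) hInn
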